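/- arXiv:2008.10345 — 4 statements merged into one kernel-verified Lean document; each statement's English description precedes it below -/
import Mathlib

section
/- Let q ∈ ℂ[x₁,…,xₙ,z] be a family of polynomials indexed by a ∈ ℂ, i.e., suppose for every a ∈ ℂ there exists q_a ∈ ℂ[x₁,…,xₙ,z] with q_a(0,…,0,a) ≠ 0 and q_a ∈ J for a fixed ideal J of ℂ[x₁,…,xₙ,z]. Then there exists q ∈ J such that 1 − q lies in the ideal (x₁,…,xₙ)·ℂ[x₁,…,xₙ,z]. -/
open MvPolynomial

/-!
Specialising the `x`-variables to `0` maps `J` onto an ideal `I` of `ℂ[z]` whose elements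
have no common zero, so `I = ℂ[z]` by the fundamental theorem of algebra. An element of `J`
mapping to `1` is the required `q`, because a polynomial is congruent modulo `(x₁,…,xₙ)` to
its specialisation at `x = 0`.
-/

theorem Polynomial.ideal_eq_top_of_forall_exists_eval_ne_zero {K : Type*} [Field K]
    [IsAlgClosed K] {I : Ideal (Polynomial K)} (h : ∀ a : K, ∃ p ∈ I, p.eval a ≠ 0) :
    I = ⊤ := by
  rw [← I.span_singleton_generator, Ideal.span_singleton_eq_top,
    Polynomial.isUnit_iff_degree_eq_zero]
  by_contra hdeg
  obtain ⟨a, ha⟩ := IsAlgClosed.exists_root _ hdeg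
  obtain ⟨p, hpI, hpa⟩ := h a
  rw [← I.span_singleton_generator, Ideal.mem_span_singleton] at hpI
  exact hpa (Polynomial.eval_eq_zero_of_dvd_of_eval_eq_zero hpI ha)

namespace MvPolynomial

section EvalInlZero

variable (σ R : Type*) [CommRing R]

noncomputable def evalInlZero : MvPolynomial (σ ⊕ Unit) R →ₐ[R] Polynomial R :=
  aeval (Sum.elim 0 fun _ => Polynomial.X)

variable {σ R}

theorem eval_evalInlZero (a : R) (p : MvPolynomial (σ ⊕ Unit) R) :
    (evalInlZero σ R p).eval a = eval (Sum.elim (fun _ => 0) fun _ => a) p := by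
  have hcomp : (Polynomial.aeval a).comp (evalInlZero σ R) =
      aeval (Sum.elim (fun _ => 0) fun _ => a) :=
    algHom_ext fun i => by cases i <;> simp [evalInlZero]
  simpa using DFunLike.congr_fun hcomp p

theorem evalInlZero_toMvPolynomial (p : Polynomial R) :
    evalInlZero σ R (p.toMvPolynomial (Sum.inr ())) = p := by
  have hcomp : (evalInlZero σ R).comp (Polynomial.toMvPolynomial (Sum.inr ())) = AlgHom.id R _ :=
    Polynomial.algHom_ext (by simp [evalInlZero])
  exact DFunLike.congr_fun hcomp p

theorem evalInlZero_surjective : Function.Surjective (evalInlZero σ R) :=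
  fun p => ⟨_, evalInlZero_toMvPolynomial p⟩

theorem toMvPolynomial_evalInlZero_sub_mem_span (p : MvPolynomial (σ ⊕ Unit) R) :
    (evalInlZero σ R p).toMvPolynomial (Sum.inr ()) - p ∈
      Ideal.span (Set.range fun i : σ => (X (Sum.inl i) : MvPolynomial (σ ⊕ Unit) R)) := by
  set K := Ideal.span (Set.range fun i : σ => (X (Sum.inl i) : MvPolynomial (σ ⊕ Unit) R))
  rw [← Ideal.Quotient.mk_eq_mk_iff_sub_mem, ← Ideal.Quotient.mkₐ_eq_mk R, ← AlgHom.comp_apply,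
    ← AlgHom.comp_apply]
  congr 1
  refine algHom_ext fun i => ?_
  rcases i with i | _
  · have hx : (X (Sum.inl i) : MvPolynomial (σ ⊕ Unit) R) ∈ K := Ideal.subset_span ⟨i, rfl⟩
    simp [evalInlZero, Ideal.Quotient.eq_zero_iff_mem.mpr hx]
  · simp [evalInlZero]

end EvalInlZero

end MvPolynomial

/-- Let `J` be an ideal of `ℂ[x₁,…,xₙ,z]` (variables indexed by `Fin n ⊕ Unit`, with
`Sum.inl i` the `xᵢ` and `Sum.inr ()` the variable `z`).  Suppose that for every `a ∈ ℂ`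
there is `q_a ∈ J` with `q_a(0,…,0,a) ≠ 0`.  Then there exists `q ∈ J` such that
`1 − q` lies in the ideal `(x₁,…,xₙ)`. -/
theorem exists_elem_of_ideal_congruent_one (n : ℕ)
    (J : Ideal (MvPolynomial (Fin n ⊕ Unit) ℂ))
    (h : ∀ a : ℂ, ∃ q ∈ J,
      MvPolynomial.eval (Sum.elim (fun _ => (0 : ℂ)) (fun _ => a)) q ≠ 0) :
    ∃ q ∈ J, 1 - q ∈ Ideal.span
      (Set.range fun i : Fin n => (X (Sum.inl i) : MvPolynomial (Fin n ⊕ Unit) ℂ)) := by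
  have hmap : J.map (evalInlZero (Fin n) ℂ) = ⊤ := by
    refine Polynomial.ideal_eq_top_of_forall_exists_eval_ne_zero fun a => ?_
    obtain ⟨q, hqJ, hq⟩ := h a
    exact ⟨_, Ideal.mem_map_of_mem _ hqJ, by rwa [eval_evalInlZero]⟩
  have hone : (1 : Polynomial ℂ) ∈ J.map (evalInlZero (Fin n) ℂ) := hmap ▸ Submodule.mem_top
  obtain ⟨q, hqJ, hq⟩ := (Ideal.mem_map_iff_of_surjective _ evalInlZero_surjective).mp hone
  refine ⟨q, hqJ, ?_⟩
  simpa [hq] using toMvPolynomial_evalInlZero_sub_mem_span q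
end

section
/- Let n ≥ 2 and let g ∈ ℂ[x₁,…,x_{n−1}] have an isolated singularity at the origin with Milnor number μ₀(g) = dim_ℂ ℂ[x₁,…,x_{n−1}]_{(x)}/(∂g/∂x₁,…,∂g/∂x_{n−1}). Then for every integer d ≥ 2, the polynomial h = g(x₁,…,x_{n−1}) + x_n^d has an isolated singularity at the origin of ℂⁿ with Milnor number μ₀(h) = (d−1)·μ₀(g). -/
set_option maxHeartbeats 1000000
set_option synthInstance.maxHeartbeats 400000

open MvPolynomial

/-- The maximal ideal of `ℂ[x₁,…,x_k]` corresponding to the origin (kernel of evaluation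
at `0`). -/
noncomputable def originIdeal (k : ℕ) : Ideal (MvPolynomial (Fin k) ℂ) :=
  RingHom.ker (MvPolynomial.aeval (fun _ : Fin k => (0 : ℂ))).toRingHom

instance originIdeal_isPrime (k : ℕ) : (originIdeal k).IsPrime :=
  RingHom.ker_isPrime _

/-- The local ring of `ℂⁿ` at the origin: `ℂ[x₁,…,x_k]_{(x₁,…,x_k)}`. -/
noncomputable def LocalRingAtOrigin (k : ℕ) : Type :=
  Localization.AtPrime (originIdeal k)

noncomputable instance (k : ℕ) : CommRing (LocalRingAtOrigin k) :=
  inferInstanceAs (CommRing (Localization.AtPrime (originIdeal k)))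

noncomputable instance (k : ℕ) : Algebra (MvPolynomial (Fin k) ℂ) (LocalRingAtOrigin k) :=
  inferInstanceAs (Algebra (MvPolynomial (Fin k) ℂ) (Localization.AtPrime (originIdeal k)))

noncomputable instance (k : ℕ) : Algebra ℂ (LocalRingAtOrigin k) :=
  inferInstanceAs (Algebra ℂ (Localization.AtPrime (originIdeal k)))

/-- The Jacobian ideal of `f`, extended to the local ring at the origin. -/
noncomputable def jacobianIdealAtOrigin {k : ℕ} (f : MvPolynomial (Fin k) ℂ) :
    Ideal (LocalRingAtOrigin k) :=
  (Ideal.span (Set.range fun i : Fin k => pderiv i f)).map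
    (algebraMap (MvPolynomial (Fin k) ℂ) (LocalRingAtOrigin k))

/-- The Milnor algebra of `f` at the origin: the quotient of the local ring at the origin
by the Jacobian ideal of `f`. -/
noncomputable def MilnorAlgebra {k : ℕ} (f : MvPolynomial (Fin k) ℂ) : Type :=
  LocalRingAtOrigin k ⧸ jacobianIdealAtOrigin f

noncomputable instance {k : ℕ} (f : MvPolynomial (Fin k) ℂ) : CommRing (MilnorAlgebra f) :=
  inferInstanceAs (CommRing (LocalRingAtOrigin k ⧸ jacobianIdealAtOrigin f))

noncomputable instance {k : ℕ} (f : MvPolynomial (Fin k) ℂ) : Algebra ℂ (MilnorAlgebra f) :=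
  inferInstanceAs (Algebra ℂ (LocalRingAtOrigin k ⧸ jacobianIdealAtOrigin f))

/-- The Milnor number of `f` at the origin: the `ℂ`-dimension of the Milnor algebra. -/
noncomputable def milnorNumber {k : ℕ} (f : MvPolynomial (Fin k) ℂ) : ℕ :=
  Module.finrank ℂ (MilnorAlgebra f)

/-!
Since `d` is invertible, the Jacobian ideal of `h = g + t ^ d` is generated by the partials of
`g` together with `t ^ (d - 1)`, so the Milnor algebra of `h` is `M(g)[t] / (t ^ (d - 1))`, a free
`M(g)`-module of rank `d - 1`. The only point needing care is the localization: a polynomial in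
`x, t` not vanishing at the origin becomes a unit of `M(g)[t] / (t ^ (d - 1))`, because `t` is
nilpotent there and its reduction modulo `t` is a unit of `M(g)`.
-/

open scoped Polynomial

namespace AdjoinRoot

theorem isUnit_of_isUnit_lift_zero {R : Type*} [CommRing R] {n : ℕ} (hn : n ≠ 0)
    {x : AdjoinRoot (Polynomial.X ^ n : R[X])}
    (hx : IsUnit (lift (RingHom.id R) 0 (by simp [hn]) x)) : IsUnit x := by
  obtain ⟨p, rfl⟩ := mk_surjective x
  set q : R[X] := Polynomial.X ^ n
  obtain ⟨r, hr⟩ := Polynomial.X_dvd_sub_C (p := p)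
  have hsplit : mk q p = of q (p.coeff 0) + root q * mk q r := by
    rw [← mk_C, ← mk_X, ← map_mul, ← hr, ← map_add, add_sub_cancel]
  have hnil : IsNilpotent (root q * mk q r) :=
    ⟨n, by rw [mul_pow, ← mk_X, ← map_pow, mk_self, zero_mul]⟩
  rw [lift_mk, Polynomial.eval₂_id, ← Polynomial.coeff_zero_eq_eval_zero] at hx
  rw [hsplit]
  exact hnil.isUnit_add_left_of_commute (hx.map _) (Commute.all _ _)

variable {K A : Type*} [Field K] [CommRing A] [Algebra K A] [Module.Finite K A]
  {p : A[X]}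

theorem finrank_of_monic (hp : p.Monic) :
    Module.finrank K (AdjoinRoot p) = p.natDegree * Module.finrank K A := by
  rw [((powerBasis' hp).basis.equivFun.restrictScalars K).finrank_eq, Module.finrank_pi_fintype]
  simp

theorem finrank_X_pow (n : ℕ) :
    Module.finrank K (AdjoinRoot (Polynomial.X ^ n : A[X])) = n * Module.finrank K A := by
  obtain hA | hA := subsingleton_or_nontrivial A
  · have : Subsingleton (AdjoinRoot (Polynomial.X ^ n : A[X])) := mk_surjective.subsingleton
    simp [Module.finrank_zero_of_subsingleton]
  · rw [finrank_of_monic (Polynomial.monic_X_pow n), Polynomial.natDegree_X_pow]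

end AdjoinRoot

namespace MvPolynomial

variable {R : Type*} [CommRing R] {k : ℕ}

noncomputable def addPowLast (g : MvPolynomial (Fin k) R) (d : ℕ) :
    MvPolynomial (Fin (k + 1)) R :=
  rename Fin.castSucc g + X (Fin.last k) ^ d

variable (g : MvPolynomial (Fin k) R) (d : ℕ)

theorem pderiv_castSucc_addPowLast (i : Fin k) :
    pderiv i.castSucc (addPowLast g d) = rename Fin.castSucc (pderiv i g) := by
  rw [addPowLast, map_add, pderiv_rename (Fin.castSucc_injective k), pderiv_pow,
    pderiv_X_of_ne (Fin.castSucc_lt_last i).ne', mul_zero, add_zero]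

theorem pderiv_last_addPowLast :
    pderiv (Fin.last k) (addPowLast g d) =
      (d : MvPolynomial (Fin (k + 1)) R) * X (Fin.last k) ^ (d - 1) := by
  rw [addPowLast, map_add, pderiv_pow, pderiv_X_self, mul_one,
    pderiv_eq_zero_of_notMem_vars, zero_add]
  intro hv
  obtain ⟨j, -, hj⟩ := mem_vars_rename _ _ hv
  exact (Fin.castSucc_lt_last j).ne hj

end MvPolynomial

namespace MilnorAlgebra

variable {k : ℕ}

instance : IsScalarTower ℂ (MvPolynomial (Fin k) ℂ) (LocalRingAtOrigin k) :=
  inferInstanceAs (IsScalarTower ℂ _ (Localization.AtPrime (originIdeal k)))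

instance : IsLocalization.AtPrime (LocalRingAtOrigin k) (originIdeal k) :=
  inferInstanceAs (IsLocalization.AtPrime (Localization.AtPrime (originIdeal k)) _)

variable (f : MvPolynomial (Fin k) ℂ)

noncomputable def mk : MvPolynomial (Fin k) ℂ →ₐ[ℂ] MilnorAlgebra f :=
  (Ideal.Quotient.mkₐ ℂ (jacobianIdealAtOrigin f)).comp
    (IsScalarTower.toAlgHom ℂ (MvPolynomial (Fin k) ℂ) (LocalRingAtOrigin k))

theorem mk_pderiv (i : Fin k) : mk f (pderiv i f) = 0 :=
  Ideal.Quotient.eq_zero_iff_mem.2 (Ideal.mem_map_of_mem _ (Ideal.subset_span ⟨i, rfl⟩))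

theorem isUnit_mk {p : MvPolynomial (Fin k) ℂ} (hp : p ∉ originIdeal k) :
    IsUnit (mk f p) :=
  ((IsLocalization.AtPrime.isUnit_to_map_iff (LocalRingAtOrigin k) (originIdeal k) p).2 hp).map
    (Ideal.Quotient.mk _)

variable {f} {A : Type*} [CommRing A] [Algebra ℂ A]

noncomputable def lift (φ : MvPolynomial (Fin k) ℂ →ₐ[ℂ] A)
    (hunit : ∀ p, p ∉ originIdeal k → IsUnit (φ p)) (hjac : ∀ i, φ (pderiv i f) = 0) :
    MilnorAlgebra f →ₐ[ℂ] A :=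
  Ideal.Quotient.liftₐ _
    (IsLocalization.liftAlgHom (M := (originIdeal k).primeCompl) fun p ↦ hunit p p.2) <|
      fun _ ha ↦ (Ideal.map_le_iff_le_comap (K := RingHom.ker _)).2
        (Ideal.span_le.2 <| Set.range_subset_iff.2 fun i ↦ by
          simpa [IsLocalization.lift_eq] using hjac i) ha

theorem lift_mk (φ : MvPolynomial (Fin k) ℂ →ₐ[ℂ] A)
    (hunit : ∀ p, p ∉ originIdeal k → IsUnit (φ p)) (hjac : ∀ i, φ (pderiv i f) = 0)
    (p : MvPolynomial (Fin k) ℂ) : lift φ hunit hjac (mk f p) = φ p :=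
  IsLocalization.lift_eq (M := (originIdeal k).primeCompl) (S := LocalRingAtOrigin k) _ p

theorem algHom_ext {ψ₁ ψ₂ : MilnorAlgebra f →ₐ[ℂ] A}
    (h : ∀ i, ψ₁ (mk f (X i)) = ψ₂ (mk f (X i))) : ψ₁ = ψ₂ :=
  Ideal.Quotient.algHom_ext ℂ <| IsLocalization.algHom_ext (originIdeal k).primeCompl <|
    MvPolynomial.algHom_ext h

section AddPowLast

variable (g : MvPolynomial (Fin k) ℂ) (d : ℕ)

noncomputable def polyToAdjoinRoot :
    MvPolynomial (Fin (k + 1)) ℂ →ₐ[ℂ]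
      AdjoinRoot (Polynomial.X ^ (d - 1) : (MilnorAlgebra g)[X]) :=
  aeval (Fin.lastCases (AdjoinRoot.root _) fun i ↦ AdjoinRoot.of _ (mk g (X i)))

theorem polyToAdjoinRoot_comp_rename :
    (polyToAdjoinRoot g d).comp (rename Fin.castSucc) = (AdjoinRoot.ofAlgHom ℂ _).comp (mk g) :=
  MvPolynomial.algHom_ext fun i ↦ by simp [polyToAdjoinRoot]

theorem polyToAdjoinRoot_X_last : polyToAdjoinRoot g d (X (Fin.last k)) = AdjoinRoot.root _ := by
  simp [polyToAdjoinRoot]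

theorem polyToAdjoinRoot_pderiv_addPowLast (i : Fin (k + 1)) :
    polyToAdjoinRoot g d (pderiv i (addPowLast g d)) = 0 := by
  induction i using Fin.lastCases with
  | last =>
    rw [pderiv_last_addPowLast, map_mul, map_pow, polyToAdjoinRoot_X_last, ← AdjoinRoot.mk_X,
      ← map_pow, AdjoinRoot.mk_self, mul_zero]
  | cast i =>
    rw [pderiv_castSucc_addPowLast, ← AlgHom.comp_apply, polyToAdjoinRoot_comp_rename,
      AlgHom.comp_apply, mk_pderiv, map_zero]

theorem isUnit_polyToAdjoinRoot (hd : 2 ≤ d) {p : MvPolynomial (Fin (k + 1)) ℂ}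
    (hp : p ∉ originIdeal (k + 1)) : IsUnit (polyToAdjoinRoot g d p) := by
  have hd' : d - 1 ≠ 0 := by omega
  let ε := AdjoinRoot.liftAlgHom (Polynomial.X ^ (d - 1)) (AlgHom.id ℂ (MilnorAlgebra g)) 0
    (by simp [hd'])
  let restrict : MvPolynomial (Fin (k + 1)) ℂ →ₐ[ℂ] MvPolynomial (Fin k) ℂ :=
    aeval (Fin.lastCases 0 X)
  have hε : ε.comp (polyToAdjoinRoot g d) = (mk g).comp restrict := by
    refine MvPolynomial.algHom_ext fun i ↦ ?_
    induction i using Fin.lastCases <;> simp [ε, restrict, polyToAdjoinRoot]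
  have hrestrict : (aeval fun _ ↦ (0 : ℂ)).comp restrict = aeval fun _ ↦ 0 := by
    refine MvPolynomial.algHom_ext fun i ↦ ?_
    induction i using Fin.lastCases <;> simp [restrict]
  refine AdjoinRoot.isUnit_of_isUnit_lift_zero hd' (?_ : IsUnit (ε _))
  rw [← AlgHom.comp_apply, hε]
  refine isUnit_mk g fun hmem ↦ hp ?_
  change aeval _ p = 0
  rwa [← hrestrict]

noncomputable def toAdjoinRoot (hd : 2 ≤ d) :
    MilnorAlgebra (addPowLast g d) →ₐ[ℂ]
      AdjoinRoot (Polynomial.X ^ (d - 1) : (MilnorAlgebra g)[X]) :=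
  lift (polyToAdjoinRoot g d) (fun _ ↦ isUnit_polyToAdjoinRoot g d hd)
    (polyToAdjoinRoot_pderiv_addPowLast g d)

theorem toAdjoinRoot_mk (hd : 2 ≤ d) (p : MvPolynomial (Fin (k + 1)) ℂ) :
    toAdjoinRoot g d hd (mk _ p) = polyToAdjoinRoot g d p :=
  lift_mk _ _ _ p

noncomputable def renameCastSucc : MilnorAlgebra g →ₐ[ℂ] MilnorAlgebra (addPowLast g d) :=
  lift ((mk _).comp (rename Fin.castSucc))
    (fun p hp ↦ isUnit_mk _ fun hmem ↦ hp <| by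
      change aeval _ (rename _ p) = 0 at hmem
      rwa [aeval_rename] at hmem)
    (fun i ↦ by rw [AlgHom.comp_apply, ← pderiv_castSucc_addPowLast, mk_pderiv])

theorem renameCastSucc_mk (p : MvPolynomial (Fin k) ℂ) :
    renameCastSucc g d (mk g p) = mk _ (rename Fin.castSucc p) :=
  lift_mk _ _ _ p

theorem mk_X_last_pow_eq_zero (hd : d ≠ 0) :
    mk (addPowLast g d) (X (Fin.last k)) ^ (d - 1) = 0 := by
  have hunit : IsUnit (d : MilnorAlgebra (addPowLast g d)) := by
    simpa using (Ne.isUnit (Nat.cast_ne_zero.2 hd : (d : ℂ) ≠ 0)).map (algebraMap ℂ _)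
  have h := mk_pderiv (addPowLast g d) (Fin.last k)
  rw [pderiv_last_addPowLast, map_mul, map_pow, map_natCast] at h
  exact hunit.mul_right_eq_zero.1 h

noncomputable def ofAdjoinRoot (hd : d ≠ 0) :
    AdjoinRoot (Polynomial.X ^ (d - 1) : (MilnorAlgebra g)[X]) →ₐ[ℂ]
      MilnorAlgebra (addPowLast g d) :=
  AdjoinRoot.liftAlgHom _ (renameCastSucc g d) (mk _ (X (Fin.last k)))
    (by simp [mk_X_last_pow_eq_zero g d hd])

noncomputable def addPowLastEquiv (hd : 2 ≤ d) :
    MilnorAlgebra (addPowLast g d) ≃ₐ[ℂ]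
      AdjoinRoot (Polynomial.X ^ (d - 1) : (MilnorAlgebra g)[X]) :=
  AlgEquiv.ofAlgHom (toAdjoinRoot g d hd) (ofAdjoinRoot g d (by omega))
    (AdjoinRoot.algHom_ext' (algHom_ext fun i ↦ by
        simp [ofAdjoinRoot, renameCastSucc_mk, toAdjoinRoot_mk, polyToAdjoinRoot])
      (by simp [ofAdjoinRoot, toAdjoinRoot_mk, polyToAdjoinRoot_X_last]))
    (algHom_ext fun i ↦ by
      induction i using Fin.lastCases <;>
        simp [ofAdjoinRoot, renameCastSucc_mk, toAdjoinRoot_mk, polyToAdjoinRoot])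

end AddPowLast

end MilnorAlgebra

theorem milnor_number_add_pow_general (k : ℕ) (g : MvPolynomial (Fin k) ℂ)
    (hfin : FiniteDimensional ℂ (MilnorAlgebra g))
    (d : ℕ) (hd : 2 ≤ d) :
    FiniteDimensional ℂ
        (MilnorAlgebra (rename (Fin.castSucc) g + X (Fin.last k) ^ d)) ∧
      milnorNumber (rename (Fin.castSucc) g + X (Fin.last k) ^ d) =
        (d - 1) * milnorNumber g := by
  let e := (MilnorAlgebra.addPowLastEquiv g d hd).toLinearEquiv
  have := (Polynomial.monic_X_pow (R := MilnorAlgebra g) (d - 1)).finite_adjoinRoot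
  have : Module.Finite ℂ (AdjoinRoot (Polynomial.X ^ (d - 1) : (MilnorAlgebra g)[X])) :=
    .trans (MilnorAlgebra g) _
  exact ⟨.equiv e.symm, e.finrank_eq.trans (AdjoinRoot.finrank_X_pow _)⟩

/-- **Thom–Sebastiani for adding a power of a new variable.**
Let `n = k + 1 ≥ 2` and let `g ∈ ℂ[x₁,…,x_k]` have an isolated singularity at the origin
(it vanishes together with all its partial derivatives at `0`, and its Milnor algebra is
finite dimensional, with Milnor number `μ₀(g)`).  Then for every `d ≥ 2` the polynomial
`h = g(x₁,…,x_k) + x_{k+1}^d` has an isolated singularity at the origin of `ℂ^{k+1}`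
with Milnor number `μ₀(h) = (d−1)·μ₀(g)`. -/
theorem milnor_number_add_pow (k : ℕ) (hk : 1 ≤ k) (g : MvPolynomial (Fin k) ℂ)
    (hg0 : MvPolynomial.aeval (fun _ : Fin k => (0 : ℂ)) g = 0)
    (hgsing : ∀ i : Fin k, MvPolynomial.aeval (fun _ : Fin k => (0 : ℂ)) (pderiv i g) = 0)
    (hfin : FiniteDimensional ℂ (MilnorAlgebra g))
    (d : ℕ) (hd : 2 ≤ d) :
    FiniteDimensional ℂ
        (MilnorAlgebra (rename (Fin.castSucc) g + X (Fin.last k) ^ d)) ∧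
      milnorNumber (rename (Fin.castSucc) g + X (Fin.last k) ^ d) =
        (d - 1) * milnorNumber g :=
  milnor_number_add_pow_general k g hfin d hd
end

section
/- Let (R, 𝔪) be a Noetherian local ring and I ⊆ J two 𝔪-primary ideals of R. If I and J have the same integral closure, then e(I; R) = e(J; R). -/
open IsLocalRing

/-- The length of the `R`-module `R ⧸ I`, as the Krull dimension (longest chain) of the
lattice of submodules. -/
noncomputable def quotLength (R : Type*) [CommRing R] (I : Ideal R) : WithBot ℕ∞ :=
  Order.krullDim (Submodule R (R ⧸ I))

/-- `e` is the Hilbert–Samuel multiplicity of the ideal `I` in the `d`-dimensional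
local ring `R`:  `ℓ(R/I^m) · d! / m^d → e` as `m → ∞`. -/
def IsHSMultiplicity (R : Type*) [CommRing R] (I : Ideal R) (d : ℕ) (e : ℕ) : Prop :=
  Filter.Tendsto
    (fun m : ℕ => (WithBot.unbotD 0 (quotLength R (I ^ m))).toNat * (Nat.factorial d) / (m : ℝ) ^ d)
    Filter.atTop (nhds (e : ℝ))

/-- `x` is integral over the ideal `I`: there is an equation
`xⁿ + a₁ x^{n−1} + ⋯ + aₙ = 0` with `aᵢ ∈ Iⁱ`. -/
def IsIntegralOverIdeal {R : Type*} [CommRing R] (I : Ideal R) (x : R) : Prop :=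
  ∃ n : ℕ, 0 < n ∧ ∃ a : Fin n → R, (∀ i : Fin n, a i ∈ I ^ ((i : ℕ) + 1)) ∧
    x ^ n + ∑ i : Fin n, a i * x ^ (n - 1 - (i : ℕ)) = 0

/-!
If every element of the finitely generated ideal `J ⊇ I` is integral over `I`, then
`J ^ (m + k) ⊆ I ^ m ⊆ J ^ m` for a fixed shift `k`: an equation of integral dependence of
degree `n` gives `x ^ e ∈ I ^ (e - (n - 1))`, and the binomial theorem propagates such shifted
bounds from generators to the ideal they generate. Hence
`ℓ(R/J^m) ≤ ℓ(R/I^m) ≤ ℓ(R/J^(m+k))`, and since `(m + k)^d / m^d → 1`, the normalised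
lengths have the same limit.
-/

open Filter Topology

lemma Ideal.FG.exists_pow_le_pow_sub {R : Type*} [CommSemiring R] {I K : Ideal R}
    (hK : K.FG) (h : ∀ x ∈ K, ∃ c : ℕ, ∀ e : ℕ, x ^ e ∈ I ^ (e - c)) :
    ∃ c : ℕ, ∀ e : ℕ, K ^ e ≤ I ^ (e - c) := by
  induction K, hK using Submodule.fg_induction with
  | singleton x =>
    obtain ⟨c, hc⟩ := h x (Submodule.mem_span_singleton_self x)
    refine ⟨c, fun e => ?_⟩
    rw [← Ideal.span, Ideal.span_singleton_pow, Ideal.span_le, Set.singleton_subset_iff]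
    exact hc e
  | sup K₁ K₂ _ _ h₁ h₂ =>
    obtain ⟨c₁, hc₁⟩ := h₁ fun x hx => h x (Submodule.mem_sup_left hx)
    obtain ⟨c₂, hc₂⟩ := h₂ fun x hx => h x (Submodule.mem_sup_right hx)
    refine ⟨c₁ + c₂, fun e => ?_⟩
    rw [← Ideal.add_eq_sup, add_pow, Ideal.sum_eq_sup, Finset.sup_le_iff]
    intro i hi
    rw [Finset.mem_range] at hi
    calc K₁ ^ i * K₂ ^ (e - i) * (e.choose i : Ideal R)
        ≤ I ^ (i - c₁) * I ^ (e - i - c₂) :=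
          Ideal.mul_le_left.trans (Ideal.mul_mono (hc₁ i) (hc₂ _))
      _ = I ^ (i - c₁ + (e - i - c₂)) := (pow_add _ _ _).symm
      _ ≤ I ^ (e - (c₁ + c₂)) := Ideal.pow_le_pow_right (by omega)

section IntegralOverIdeal

variable {R : Type*} [CommRing R]

lemma isIntegralOverIdeal_of_mem {I : Ideal R} {x : R} (hx : x ∈ I) :
    IsIntegralOverIdeal I x :=
  ⟨1, one_pos, fun _ => -x, fun _ => by simpa using I.neg_mem hx, by simp⟩

lemma IsIntegralOverIdeal.exists_pow_mem_pow_sub {I : Ideal R} {x : R}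
    (hx : IsIntegralOverIdeal I x) : ∃ c : ℕ, ∀ e : ℕ, x ^ e ∈ I ^ (e - c) := by
  obtain ⟨n, -, a, ha, heq⟩ := hx
  refine ⟨n - 1, fun e => ?_⟩
  induction e using Nat.strong_induction_on with
  | _ e ih =>
    rcases lt_or_ge e n with he | he
    · simp [Nat.sub_eq_zero_of_le (Nat.le_sub_one_of_lt he)]
    have hrec : x ^ e = -∑ i : Fin n, a i * x ^ (e - 1 - (i : ℕ)) := by
      rw [← Nat.sub_add_cancel he, pow_add, eq_neg_of_add_eq_zero_left heq, mul_neg,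
        Finset.mul_sum]
      refine congrArg _ (Finset.sum_congr rfl fun i _ => ?_)
      rw [mul_left_comm, ← pow_add]
      congr 2
      omega
    rw [hrec]
    refine neg_mem (Submodule.sum_mem _ fun i _ => ?_)
    have hi := i.is_lt
    have hmem := Ideal.mul_mem_mul (ha i) (ih (e - 1 - i) (by omega))
    rw [← pow_add] at hmem
    exact Ideal.pow_le_pow_right (by omega) hmem

lemma exists_pow_add_le_pow_of_forall_isIntegralOverIdeal {I J : Ideal R} (hJ : J.FG)
    (h : ∀ x ∈ J, IsIntegralOverIdeal I x) :
    ∃ k : ℕ, ∀ m : ℕ, J ^ (m + k) ≤ I ^ m := by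
  obtain ⟨k, hk⟩ := hJ.exists_pow_le_pow_sub fun x hx => (h x hx).exists_pow_mem_pow_sub
  exact ⟨k, fun m => by simpa using hk (m + k)⟩

end IntegralOverIdeal

lemma quotLength_antitone (R : Type*) [CommRing R] : Antitone (quotLength R) := fun _ _ h =>
  Order.krullDim_le_of_strictMono _
    (Submodule.comap_strictMono_of_surjective (Submodule.factor_surjective h))

lemma unbotD_quotLength_antitone (R : Type*) [CommRing R] :
    Antitone fun K : Ideal R => (quotLength R K).unbotD 0 := fun _ _ h =>
  WithBot.unbotD_mono (Order.krullDim_ne_bot_iff.2 inferInstance) (quotLength_antitone R h)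

/-- `ENat.toNat ⊤ = 0` spoils monotonicity, but once `b` reaches `⊤` every term is `⊤`. -/
lemma ENat.eventually_toNat_le_of_le_shift {a b : ℕ → ℕ∞} {k : ℕ} (hb : Monotone b)
    (hba : ∀ m, b m ≤ a m) (hab : ∀ m, a m ≤ b (m + k)) :
    ∀ᶠ m in atTop, (b m).toNat ≤ (a m).toNat ∧ (a m).toNat ≤ (b (m + k)).toNat := by
  by_cases hfin : ∀ m, b m ≠ ⊤
  · exact Eventually.of_forall fun m =>
      ⟨ENat.toNat_le_toNat (hba m) (ne_top_of_le_ne_top (hfin _) (hab m)),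
        ENat.toNat_le_toNat (hab m) (hfin _)⟩
  push Not at hfin
  obtain ⟨m₀, hm₀⟩ := hfin
  have htop : ∀ m, m₀ ≤ m → b m = ⊤ := fun m hm => top_le_iff.1 (hm₀ ▸ hb hm)
  filter_upwards [eventually_ge_atTop m₀] with m hm
  simp [htop m hm, htop (m + k) (by omega), top_le_iff.1 (htop m hm ▸ hba m)]

lemma eq_of_tendsto_div_pow_of_le_shift {u v : ℕ → ℝ} {k d : ℕ} {a b : ℝ}
    (h : ∀ᶠ m in atTop, v m ≤ u m ∧ u m ≤ v (m + k))
    (hu : Tendsto (fun m => u m / (m : ℝ) ^ d) atTop (𝓝 a))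
    (hv : Tendsto (fun m => v m / (m : ℝ) ^ d) atTop (𝓝 b)) : a = b := by
  have hba : b ≤ a := le_of_tendsto_of_tendsto hv hu <| h.mono fun m hm =>
    div_le_div_of_nonneg_right hm.1 (by positivity)
  have hratio : Tendsto (fun m : ℕ => (1 + (k : ℝ) / m) ^ d) atTop (𝓝 1) := by
    simpa using ((tendsto_const_div_atTop_nhds_zero_nat (k : ℝ)).const_add 1).pow d
  have hshift : Tendsto (fun m => v (m + k) / (m : ℝ) ^ d) atTop (𝓝 b) := by
    refine (mul_one b ▸ (hv.comp (tendsto_add_atTop_nat k)).mul hratio).congr' ?_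
    filter_upwards [eventually_gt_atTop 0] with m hm
    have hm0 : (m : ℝ) ≠ 0 := by positivity
    simp only [Function.comp_apply, Nat.cast_add]
    rw [one_add_div hm0, add_comm (m : ℝ), div_pow]
    field_simp
  have hab : a ≤ b := le_of_tendsto_of_tendsto hu hshift <| h.mono fun m hm =>
    div_le_div_of_nonneg_right hm.2 (by positivity)
  exact le_antisymm hab hba

theorem hs_multiplicity_eq_of_integral_closure_eq_general {R : Type*} [CommRing R]
    [IsNoetherianRing R] (d : ℕ)
    (I J : Ideal R) (hIJ : I ≤ J)
    (hclosure : ∀ x : R, IsIntegralOverIdeal I x ↔ IsIntegralOverIdeal J x)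
    (eI eJ : ℕ) (heI : IsHSMultiplicity R I d eI) (heJ : IsHSMultiplicity R J d eJ) :
    eI = eJ := by
  obtain ⟨k, hk⟩ := exists_pow_add_le_pow_of_forall_isIntegralOverIdeal
    (Ideal.fg_of_isNoetherianRing J) fun x hx => (hclosure x).2 (isIntegralOverIdeal_of_mem hx)
  have hlen := ENat.eventually_toNat_le_of_le_shift (k := k)
    (a := fun m => (quotLength R (I ^ m)).unbotD 0) (b := fun m => (quotLength R (J ^ m)).unbotD 0)
    (fun _ _ h => unbotD_quotLength_antitone R (Ideal.pow_le_pow_right h))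
    (fun m => unbotD_quotLength_antitone R (Ideal.pow_right_mono hIJ m))
    (fun m => unbotD_quotLength_antitone R (hk m))
  exact_mod_cast eq_of_tendsto_div_pow_of_le_shift (hlen.mono fun m hm =>
    ⟨mul_le_mul_of_nonneg_right (by exact_mod_cast hm.1) (Nat.cast_nonneg _),
      mul_le_mul_of_nonneg_right (by exact_mod_cast hm.2) (Nat.cast_nonneg _)⟩) heI heJ

/-- **Rees's theorem (easy direction).**
Let `(R, 𝔪)` be a Noetherian local ring of dimension `d` and `I ⊆ J` two `𝔪`-primary
ideals with the same integral closure.  Then `e(I; R) = e(J; R)`. -/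
theorem hs_multiplicity_eq_of_integral_closure_eq {R : Type*} [CommRing R] [IsLocalRing R]
    [IsNoetherianRing R] (d : ℕ) (hdim : ringKrullDim R = d)
    (I J : Ideal R) (hIJ : I ≤ J)
    (hI : I.radical = maximalIdeal R) (hJ : J.radical = maximalIdeal R)
    (hclosure : ∀ x : R, IsIntegralOverIdeal I x ↔ IsIntegralOverIdeal J x)
    (eI eJ : ℕ) (heI : IsHSMultiplicity R I d eI) (heJ : IsHSMultiplicity R J d eJ) :
    eI = eJ :=
  hs_multiplicity_eq_of_integral_closure_eq_general d I J hIJ hclosure eI eJ heI heJ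
end

section
/- Let R → S be a module-finite flat extension of commutative rings with R a reduced Noetherian ring, let M be a finitely generated S-module flat over R, and let x ∈ M. If the image of x in M ⊗_R κ(𝔭) is zero for all 𝔭 in a dense subset of Spec R, then x = 0. -/
/-!
A finitely generated flat module over a Noetherian ring is projective, so its elements are
detected by linear functionals `f : M → R`. The image of `x` in the fiber at `𝔭` being zero
forces `f x ∈ 𝔭`; an element lying in a dense set of primes is nilpotent, hence zero since `R`
is reduced.
-/

open TensorProduct

/-- The residue field `κ(𝔭)` of a prime `𝔭` of `R`. -/
noncomputable abbrev residueFieldAt {R : Type*} [CommRing R] (p : PrimeSpectrum R) :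
    Type _ :=
  IsLocalRing.ResidueField (Localization.AtPrime p.asIdeal)

section

variable {R : Type*} [CommRing R] {D : Set (PrimeSpectrum R)}

theorem PrimeSpectrum.vanishingIdeal_eq_nilradical_of_dense (hD : Dense D) :
    vanishingIdeal D = nilradical R := by
  rw [← vanishingIdeal_closure, hD.closure_eq, vanishingIdeal_univ]

theorem PrimeSpectrum.eq_zero_of_forall_mem_of_dense [IsReduced R] (hD : Dense D) {a : R}
    (ha : ∀ p ∈ D, a ∈ p.asIdeal) : a = 0 := by
  have hnil : a ∈ nilradical R :=
    vanishingIdeal_eq_nilradical_of_dense hD ▸ (mem_vanishingIdeal D a).2 ha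
  rwa [nilradical_eq_zero, Ideal.zero_eq_bot, Ideal.mem_bot] at hnil

variable {M : Type*} [AddCommGroup M] [Module R M]

theorem TensorProduct.algebraMap_apply_eq_zero_of_tmul_one_eq_zero {A : Type*} [CommRing A]
    [Algebra R A] {x : M} (hx : x ⊗ₜ[R] (1 : A) = 0) (f : Module.Dual R M) :
    algebraMap R A (f x) = 0 := by
  simpa [Algebra.algebraMap_eq_smul_one] using
    congr(TensorProduct.lid R A (f.rTensor A $hx))

theorem Module.Projective.eq_zero_of_tmul_one_eq_zero_of_dense [IsReduced R]
    [Module.Projective R M] (hD : Dense D) {x : M}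
    (hx : ∀ p ∈ D, x ⊗ₜ[R] (1 : residueFieldAt p) = 0) : x = 0 :=
  (Module.forall_dual_apply_eq_zero_iff R x).1 fun f ↦
    PrimeSpectrum.eq_zero_of_forall_mem_of_dense hD fun p hp ↦
      Ideal.algebraMap_residueField_eq_zero.1
        (algebraMap_apply_eq_zero_of_tmul_one_eq_zero (hx p hp) f)

end

theorem eq_zero_of_vanishing_on_dense_fibers_general {R S : Type*} [CommRing R] [CommRing S]
    [Algebra R S] [Module.Finite R S]
    [IsReduced R] [IsNoetherianRing R]
    {M : Type*} [AddCommGroup M] [Module R M] [Module S M] [IsScalarTower R S M]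
    [Module.Finite S M] [Module.Flat R M]
    (x : M) (D : Set (PrimeSpectrum R)) (hD : Dense D)
    (hx : ∀ p ∈ D,
      (x ⊗ₜ[R] (1 : residueFieldAt p)) = (0 : M ⊗[R] residueFieldAt p)) :
    x = 0 := by
  have : Module.Finite R M := .trans S M
  have : Module.FinitePresentation R M := Module.finitePresentation_of_finite R M
  have : Module.Projective R M := Module.Flat.projective_of_finitePresentation
  exact Module.Projective.eq_zero_of_tmul_one_eq_zero_of_dense hD hx

/-- **Vanishing on a dense set of fibers implies vanishing.**
Let `R → S` be a module-finite flat extension of commutative rings with `R` reduced and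
Noetherian, let `M` be a finitely generated `S`-module which is flat over `R`, and let
`x ∈ M`.  If the image of `x` in `M ⊗_R κ(𝔭)` is zero for all `𝔭` in a dense subset of
`Spec R`, then `x = 0`. -/
theorem eq_zero_of_vanishing_on_dense_fibers {R S : Type*} [CommRing R] [CommRing S]
    [Algebra R S] [Module.Finite R S] [Module.Flat R S]
    [IsReduced R] [IsNoetherianRing R]
    {M : Type*} [AddCommGroup M] [Module R M] [Module S M] [IsScalarTower R S M]
    [Module.Finite S M] [Module.Flat R M]
    (x : M) (D : Set (PrimeSpectrum R)) (hD : Dense D)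
    (hx : ∀ p ∈ D,
      (x ⊗ₜ[R] (1 : residueFieldAt p)) = (0 : M ⊗[R] residueFieldAt p)) :
    x = 0 :=
  eq_zero_of_vanishing_on_dense_fibers_general (S := S) x D hD hx
end
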